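/- Let d > 0 and let g : [0, π/2] → ℝ be the generalized collision invariant function g(θ) = −∫₀^θ (∫_β^{π/2} sin(2α) e^{−1/(d cos α)} dα)/(cos²β · e^{1/(d cos β)}) dβ. Then the hydrodynamic coefficients d₂ = ⟨g·(sin θ/cos θ)⟩_M / ⟨g·(sin θ/cos²θ)⟩_M and μ = d·⟨g·sin θ⟩_M / ⟨g·(sin θ/cos²θ)⟩_M are strictly positive real numbers (both numerators and the common denominator are finite and strictly negative). -/

import Mathlib

open Real MeasureTheory Set

/-- The generalized collision invariant function `g` of the nematic alignment operator. -/
noncomputable def gci (d θ : ℝ) : ℝ :=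
  -∫ β in (0:ℝ)..θ,
      (∫ α in β..(π/2), sin (2*α) * exp (-1 / (d * cos α))) /
        (cos β ^ 2 * exp (1 / (d * cos β)))

/-- Generalized von Mises average of a function `φ` on `[0, π/2)`. -/
noncomputable def gvmAvg (d : ℝ) (φ : ℝ → ℝ) : ℝ :=
  (∫ θ in (0:ℝ)..(π/2), φ θ * exp (-1 / (d * cos θ))) /
    (∫ θ in (0:ℝ)..(π/2), exp (-1 / (d * cos θ)))

/-!
The collision invariant is `g θ = -∫₀^θ I(β) e^{-1/(d cos β)} / cos² β dβ`, where
`I(β) = ∫_β^{π/2} sin 2α e^{-1/(d cos α)} dα > 0`; hence `g < 0` on `(0, π/2]`.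
The factor `e^{-1/(d cos θ)}` vanishes faster than `cos² θ` (`e^{-y} ≤ 2 / y²`), so the
integrand of `g` and the weights `sin θ / cos² θ`, `sin θ / cos θ`, `sin θ` times
`e^{-1/(d cos θ)}` are integrable on `[0, π/2]`, and `g` is continuous there. Each average
is then a negative integral over a positive normalisation, and the two coefficients are
quotients of negative numbers.
-/

theorem intervalIntegrable_of_norm_le {E : Type*} [NormedAddCommGroup E] {f : ℝ → E}
    {a b M : ℝ} (hab : a ≤ b) (hf : AEStronglyMeasurable f volume)
    (hM : ∀ x ∈ Ioo a b, ‖f x‖ ≤ M) : IntervalIntegrable f volume a b := by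
  rw [intervalIntegrable_iff_integrableOn_Ioo_of_le hab]
  exact Measure.integrableOn_of_bounded measure_Ioo_lt_top.ne hf
    (ae_restrict_of_forall_mem measurableSet_Ioo hM)

theorem intervalIntegral_neg_of_neg_on {f : ℝ → ℝ} {a b : ℝ}
    (hf : IntervalIntegrable f volume a b) (hneg : ∀ x ∈ Ioo a b, f x < 0) (hab : a < b) :
    ∫ x in a..b, f x < 0 := by
  have := intervalIntegral.intervalIntegral_pos_of_pos_on hf.neg
    (fun x hx => neg_pos.mpr (hneg x hx)) hab
  simpa only [Pi.neg_apply, intervalIntegral.integral_neg, neg_pos] using this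

theorem Real.exp_neg_one_div_le_one {x : ℝ} (hx : 0 ≤ x) : exp (-1 / x) ≤ 1 := by
  rw [exp_le_one_iff, neg_div, neg_nonpos]
  positivity

-- `y ^ 2 / 2 ≤ exp y` at `y = 1 / x`; at `x = 0` the left side is a division by zero, so `0`.
theorem Real.exp_neg_one_div_div_sq_le {x : ℝ} (hx : 0 ≤ x) : exp (-1 / x) / x ^ 2 ≤ 2 := by
  rcases hx.eq_or_lt with rfl | hx
  · norm_num
  have hquad := pow_div_factorial_le_exp (x := x⁻¹) (inv_nonneg.mpr hx.le) 2
  rw [neg_div, one_div, exp_neg, div_le_iff₀ (by positivity),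
    inv_le_comm₀ (exp_pos _) (by positivity)]
  calc (2 * x ^ 2)⁻¹ = x⁻¹ ^ 2 / (Nat.factorial 2) := by
        rw [Nat.factorial_two, Nat.cast_ofNat]; ring
    _ ≤ exp x⁻¹ := hquad

section CollisionInvariant

variable {d : ℝ}

theorem exp_neg_one_div_mul_cos_div_cos_sq_le (hd : 0 < d) {θ : ℝ} (hθ : 0 ≤ cos θ) :
    exp (-1 / (d * cos θ)) / cos θ ^ 2 ≤ 2 * d ^ 2 := by
  have := exp_neg_one_div_div_sq_le (mul_nonneg hd.le hθ)
  rw [mul_pow, ← div_div, div_right_comm, div_le_iff₀ (by positivity)] at this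
  linarith

theorem intervalIntegrable_exp_neg_one_div_mul_cos (hd : 0 < d) :
    IntervalIntegrable (fun θ => exp (-1 / (d * cos θ))) volume 0 (π / 2) :=
  intervalIntegrable_of_norm_le pi_div_two_pos.le
    (by fun_prop : Measurable _).aestronglyMeasurable fun θ hθ => by
      rw [norm_of_nonneg (exp_pos _).le]
      exact exp_neg_one_div_le_one
        (mul_nonneg hd.le (cos_nonneg_of_mem_Icc ⟨by linarith [hθ.1, pi_pos], hθ.2.le⟩))

theorem intervalIntegrable_exp_neg_one_div_mul_cos_div_cos_sq (hd : 0 < d) :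
    IntervalIntegrable (fun θ => exp (-1 / (d * cos θ)) / cos θ ^ 2) volume 0 (π / 2) :=
  intervalIntegrable_of_norm_le pi_div_two_pos.le
    (by fun_prop : Measurable _).aestronglyMeasurable fun θ hθ => by
      rw [norm_of_nonneg (by positivity)]
      exact exp_neg_one_div_mul_cos_div_cos_sq_le hd
        (cos_nonneg_of_mem_Icc ⟨by linarith [hθ.1, pi_pos], hθ.2.le⟩)

noncomputable def gciTail (d β : ℝ) : ℝ :=
  ∫ α in β..(π/2), sin (2*α) * exp (-1 / (d * cos α))

theorem intervalIntegrable_sin_two_mul_mul_exp (hd : 0 < d) :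
    IntervalIntegrable (fun α => sin (2*α) * exp (-1 / (d * cos α))) volume 0 (π / 2) :=
  (intervalIntegrable_exp_neg_one_div_mul_cos hd).continuousOn_mul (g := fun α => sin (2*α))
    (by fun_prop)

theorem continuousOn_gciTail (hd : 0 < d) : ContinuousOn (gciTail d) (Icc 0 (π / 2)) := by
  have := intervalIntegral.continuousOn_primitive_interval_left
    ((intervalIntegrable_iff' (by finiteness)).1 (intervalIntegrable_sin_two_mul_mul_exp hd))
  rwa [uIcc_of_le pi_div_two_pos.le] at this

theorem gciTail_pos (hd : 0 < d) {β : ℝ} (hβ : β ∈ Ico 0 (π / 2)) : 0 < gciTail d β := by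
  refine intervalIntegral.intervalIntegral_pos_of_pos_on ?_ (fun α hα => ?_) hβ.2
  · refine (intervalIntegrable_sin_two_mul_mul_exp hd).mono_set ?_
    rw [uIcc_of_le hβ.2.le, uIcc_of_le pi_div_two_pos.le]
    exact Icc_subset_Icc_left hβ.1
  · exact mul_pos (sin_pos_of_pos_of_lt_pi (by linarith [hβ.1, hα.1]) (by linarith [hα.2]))
      (exp_pos _)

theorem gci_eq_neg_integral (d θ : ℝ) :
    gci d θ = -∫ β in (0:ℝ)..θ, gciTail d β * (exp (-1 / (d * cos β)) / cos β ^ 2) := by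
  rw [gci]
  congr 1
  refine intervalIntegral.integral_congr fun β _ => ?_
  rw [gciTail, neg_div, exp_neg]
  ring

theorem intervalIntegrable_gciTail_mul (hd : 0 < d) :
    IntervalIntegrable (fun β => gciTail d β * (exp (-1 / (d * cos β)) / cos β ^ 2))
      volume 0 (π / 2) :=
  (intervalIntegrable_exp_neg_one_div_mul_cos_div_cos_sq hd).continuousOn_mul
    (by rw [uIcc_of_le pi_div_two_pos.le]; exact continuousOn_gciTail hd)

theorem continuousOn_gci (hd : 0 < d) : ContinuousOn (gci d) (Icc 0 (π / 2)) := by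
  have := (intervalIntegral.continuousOn_primitive_interval
    ((intervalIntegrable_iff' (by finiteness)).1 (intervalIntegrable_gciTail_mul hd))).neg
  rw [uIcc_of_le pi_div_two_pos.le] at this
  exact this.congr fun θ _ => gci_eq_neg_integral d θ

theorem gci_neg (hd : 0 < d) {θ : ℝ} (hθ : θ ∈ Ioc 0 (π / 2)) : gci d θ < 0 := by
  rw [gci_eq_neg_integral, neg_lt_zero]
  refine intervalIntegral.intervalIntegral_pos_of_pos_on ?_ (fun β hβ => ?_) hθ.1
  · refine (intervalIntegrable_gciTail_mul hd).mono_set ?_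
    rw [uIcc_of_le hθ.1.le, uIcc_of_le pi_div_two_pos.le]
    exact Icc_subset_Icc_right hθ.2
  · have hβ' : β ∈ Ioo 0 (π / 2) := ⟨hβ.1, hβ.2.trans_le hθ.2⟩
    have hcos : 0 < cos β := cos_pos_of_mem_Ioo ⟨by linarith [hβ'.1, pi_pos], hβ'.2⟩
    have := gciTail_pos hd ⟨hβ'.1.le, hβ'.2⟩
    positivity

theorem gvmAvg_gci_mul_neg (hd : 0 < d) {q : ℝ → ℝ}
    (hq : IntervalIntegrable (fun θ => q θ * exp (-1 / (d * cos θ))) volume 0 (π / 2))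
    (hq_pos : ∀ θ ∈ Ioo 0 (π / 2), 0 < q θ) :
    IntervalIntegrable (fun θ => gci d θ * q θ * exp (-1 / (d * cos θ))) volume 0 (π / 2) ∧
      gvmAvg d (fun θ => gci d θ * q θ) < 0 := by
  have hint : IntervalIntegrable (fun θ => gci d θ * q θ * exp (-1 / (d * cos θ)))
      volume 0 (π / 2) := by
    simpa only [mul_assoc] using hq.continuousOn_mul
      (by rw [uIcc_of_le pi_div_two_pos.le]; exact continuousOn_gci hd)
  refine ⟨hint, div_neg_of_neg_of_pos ?_ ?_⟩
  · exact intervalIntegral_neg_of_neg_on hint (fun θ hθ => mul_neg_of_neg_of_pos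
      (mul_neg_of_neg_of_pos (gci_neg hd ⟨hθ.1, hθ.2.le⟩) (hq_pos θ hθ)) (exp_pos _))
      pi_div_two_pos
  · exact intervalIntegral.intervalIntegral_pos_of_pos_on
      (intervalIntegrable_exp_neg_one_div_mul_cos hd) (fun _ _ => exp_pos _) pi_div_two_pos

end CollisionInvariant

/-- The hydrodynamic coefficients `d₂ = ⟨g sin/cos⟩_M / ⟨g sin/cos²⟩_M` and
`μ = d ⟨g sin⟩_M / ⟨g sin/cos²⟩_M` are strictly positive: both numerators and the common
denominator are finite and strictly negative. -/
theorem hydrodynamic_coefficients_pos (d : ℝ) (hd : 0 < d) :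
    (IntervalIntegrable
        (fun θ => gci d θ * (sin θ / cos θ ^ 2) * exp (-1 / (d * cos θ))) volume 0 (π/2) ∧
      gvmAvg d (fun θ => gci d θ * (sin θ / cos θ ^ 2)) < 0) ∧
    (IntervalIntegrable
        (fun θ => gci d θ * (sin θ / cos θ) * exp (-1 / (d * cos θ))) volume 0 (π/2) ∧
      gvmAvg d (fun θ => gci d θ * (sin θ / cos θ)) < 0) ∧
    (IntervalIntegrable
        (fun θ => gci d θ * sin θ * exp (-1 / (d * cos θ))) volume 0 (π/2) ∧
      gvmAvg d (fun θ => gci d θ * sin θ) < 0) ∧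
    0 < gvmAvg d (fun θ => gci d θ * (sin θ / cos θ))
          / gvmAvg d (fun θ => gci d θ * (sin θ / cos θ ^ 2)) ∧
    0 < d * gvmAvg d (fun θ => gci d θ * sin θ)
          / gvmAvg d (fun θ => gci d θ * (sin θ / cos θ ^ 2)) := by
  have hsin : ∀ θ ∈ Ioo 0 (π / 2), 0 < sin θ := fun θ hθ =>
    sin_pos_of_pos_of_lt_pi hθ.1 (by linarith [hθ.2, pi_pos])
  have hcos : ∀ θ ∈ Ioo 0 (π / 2), 0 < cos θ := fun θ hθ =>
    cos_pos_of_mem_Ioo ⟨by linarith [hθ.1, pi_pos], hθ.2⟩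
  have hw := intervalIntegrable_exp_neg_one_div_mul_cos hd
  have hw₂ := intervalIntegrable_exp_neg_one_div_mul_cos_div_cos_sq hd
  obtain ⟨hint₂, havg₂⟩ := gvmAvg_gci_mul_neg hd
    ((hw₂.continuousOn_mul continuous_sin.continuousOn).congr fun θ _ => by ring)
    fun θ hθ => div_pos (hsin θ hθ) (pow_pos (hcos θ hθ) 2)
  obtain ⟨hint₁, havg₁⟩ := gvmAvg_gci_mul_neg hd
    ((hw₂.continuousOn_mul (g := fun θ => sin θ * cos θ) (by fun_prop)).congr fun θ _ => by
      rcases eq_or_ne (cos θ) 0 with h | h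
      · simp [h]
      · field_simp)
    fun θ hθ => div_pos (hsin θ hθ) (hcos θ hθ)
  obtain ⟨hint₀, havg₀⟩ := gvmAvg_gci_mul_neg hd
    (hw.continuousOn_mul continuous_sin.continuousOn) hsin
  exact ⟨⟨hint₂, havg₂⟩, ⟨hint₁, havg₁⟩, ⟨hint₀, havg₀⟩, div_pos_of_neg_of_neg havg₁ havg₂,
    div_pos_of_neg_of_neg (mul_neg_of_pos_of_neg hd havg₀) havg₂⟩
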